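/- arXiv:0708.1193 — 4 statements merged into one kernel-verified Lean document; each statement's English description precedes it below -/
import Mathlib

section
/- Let 0 ≤ k ≤ k' be integers. The number of maps M : {1,…,k} → {1,…,k'} satisfying M(i) ≤ M(i+1) for 1 ≤ i ≤ k−1 and M(i) ≤ k' − k + i for 1 ≤ i ≤ k equals ((k'−k+1)/(k'+1)) · binom(k+k', k). -/
def Adm (k k' : ℕ) (M : Fin k → Fin k') : Prop :=
  (∀ i j : Fin k, i ≤ j → M i ≤ M j) ∧ ∀ i : Fin k, (M i : ℕ) + k ≤ k' + (i : ℕ)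

lemma adm_card_zero (k' : ℕ) : Nat.card {M : Fin 0 → Fin k' // Adm 0 k' M} = 1 := by
  haveI : Unique {M : Fin 0 → Fin k' // Adm 0 k' M} :=
    { default := ⟨Fin.elim0, ⟨fun i => i.elim0, fun i => i.elim0⟩⟩
      uniq := fun a => Subtype.ext (funext fun i => i.elim0) }
  exact Nat.card_unique

lemma adm_empty {k k' : ℕ} (h : k' < k) : IsEmpty {M : Fin k → Fin k' // Adm k k' M} := by
  constructor
  rintro ⟨M, hmono, hbd⟩
  have := hbd ⟨0, by omega⟩
  simp at this
  omega

/-- Bijection for maps with `M 0 = 0`. -/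
def equivA (m c : ℕ) (h : m ≤ c) :
    {M : {M : Fin (m+1) → Fin (c+1) // Adm (m+1) (c+1) M} // (M.1 0 : ℕ) = 0} ≃
      {N : Fin m → Fin (c+1) // Adm m (c+1) N} where
  toFun M := ⟨Fin.tail M.1.1, by
    obtain ⟨⟨M, hmono, hbd⟩, h0⟩ := M
    refine ⟨fun i j hij => hmono i.succ j.succ (Fin.succ_le_succ_iff.mpr hij), fun i => ?_⟩
    have := hbd i.succ
    simp only [Fin.tail, Fin.val_succ] at this ⊢
    omega⟩
  invFun N := ⟨⟨Fin.cons 0 N.1, by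
    obtain ⟨N, hmono, hbd⟩ := N
    constructor
    · intro i j hij
      induction i using Fin.cases with
      | zero => simp [Fin.cons_zero]
      | succ i =>
        induction j using Fin.cases with
        | zero => exact absurd hij (by simp [Fin.le_def])
        | succ j =>
          simp only [Fin.cons_succ]
          exact hmono i j (Fin.succ_le_succ_iff.mp hij)
    · intro i
      induction i using Fin.cases with
      | zero => simp only [Fin.cons_zero, Fin.val_zero]; omega
      | succ i =>
        have := hbd i
        simp only [Fin.cons_succ, Fin.val_succ] at this ⊢
        omega⟩, by simp⟩
  left_inv M := by
    obtain ⟨⟨M, hM⟩, h0⟩ := M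
    refine Subtype.ext (Subtype.ext ?_)
    have : M 0 = 0 := Fin.ext (by simpa using h0)
    simpa [← this] using Fin.cons_self_tail M
  right_inv N := by
    refine Subtype.ext ?_
    exact funext fun i => by simp [Fin.tail, Fin.cons_succ]

/-- Bijection for maps with `M 0 ≠ 0`. -/
def equivB (m c : ℕ) :
    {M : {M : Fin (m+1) → Fin (c+1) // Adm (m+1) (c+1) M} // ¬ (M.1 0 : ℕ) = 0} ≃
      {N : Fin (m+1) → Fin c // Adm (m+1) c N} where
  toFun M := by
    obtain ⟨⟨M, hmono, hbd⟩, h0⟩ := M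
    have h0' : (M 0 : ℕ) ≠ 0 := h0
    have hpos : ∀ i, 1 ≤ (M i : ℕ) := fun i => by
      have := Fin.le_def.mp (hmono 0 i (Fin.zero_le i))
      omega
    refine ⟨fun i => ⟨(M i : ℕ) - 1, by have := (M i).isLt; have := hpos i; omega⟩, ?_, ?_⟩
    · intro i j hij
      have := hmono i j hij
      simp only [Fin.le_def] at this ⊢
      omega
    · intro i
      have h1 := hbd i
      have h2 := hpos i
      simp only
      omega
  invFun N := by
    obtain ⟨N, hmono, hbd⟩ := N
    refine ⟨⟨fun i => ⟨(N i : ℕ) + 1, by have := (N i).isLt; omega⟩, ?_, ?_⟩, by simp⟩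
    · intro i j hij
      have := hmono i j hij
      simp only [Fin.le_def] at this ⊢
      omega
    · intro i
      have := hbd i
      simp only
      omega
  left_inv M := by
    obtain ⟨⟨M, hmono, hbd⟩, h0⟩ := M
    refine Subtype.ext (Subtype.ext (funext fun i => Fin.ext ?_))
    have h0' : (M 0 : ℕ) ≠ 0 := h0
    have hpos : 1 ≤ (M i : ℕ) := by
      have := Fin.le_def.mp (hmono 0 i (Fin.zero_le i))
      omega
    simp
    omega
  right_inv N := by
    obtain ⟨N, hmono, hbd⟩ := N
    exact Subtype.ext (funext fun i => Fin.ext (by simp))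

lemma card_split (m c : ℕ) (h : m ≤ c) :
    Nat.card {M : Fin (m+1) → Fin (c+1) // Adm (m+1) (c+1) M} =
      Nat.card {N : Fin m → Fin (c+1) // Adm m (c+1) N} +
      Nat.card {N : Fin (m+1) → Fin c // Adm (m+1) c N} := by
  classical
  rw [← Nat.card_congr (equivA m c h), ← Nat.card_congr (equivB m c), ← Nat.card_sum,
    Nat.card_congr (Equiv.sumCompl fun M : {M : Fin (m+1) → Fin (c+1) // Adm (m+1) (c+1) M} =>
      (M.1 0 : ℕ) = 0)]

lemma card_formula : ∀ k k' : ℕ, k ≤ k' →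
    (Nat.card {M : Fin k → Fin k' // Adm k k' M} : ℤ) =
      (k + k').choose k - (k + k').choose (k' + 1) := by
  intro k
  induction k with
  | zero =>
    intro k' _
    rw [adm_card_zero]
    simp [Nat.choose_succ_self]
  | succ m ih =>
    intro k'
    induction k' with
    | zero => intro h; omega
    | succ c ihc =>
      intro h
      have h1 := ih (c + 1) (by omega)
      have h2 : (Nat.card {N : Fin (m+1) → Fin c // Adm (m+1) c N} : ℤ) =
          ((m + 1) + c).choose (m + 1) - ((m + 1) + c).choose (c + 1) := by
        rcases Nat.lt_or_ge c (m + 1) with hc | hc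
        · have hcm : c = m := by omega
          subst hcm
          haveI := adm_empty (show c < c + 1 by omega)
          rw [Nat.card_of_isEmpty]
          simp
        · exact ihc hc
      rw [card_split m c (by omega), Nat.cast_add, h1, h2]
      have e1 : ((m + 1) + (c + 1)).choose (m + 1) =
          (m + c + 1).choose m + (m + c + 1).choose (m + 1) := by
        rw [show (m + 1) + (c + 1) = (m + c + 1) + 1 by omega]
        exact Nat.choose_succ_succ _ _
      have e2 : ((m + 1) + (c + 1)).choose (c + 2) =
          (m + c + 1).choose (c + 1) + (m + c + 1).choose (c + 2) := by
        rw [show (m + 1) + (c + 1) = (m + c + 1) + 1 by omega]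
        exact Nat.choose_succ_succ _ _
      rw [show m + (c + 1) = m + c + 1 by omega] at h1 ⊢
      rw [show (m + 1) + c = m + c + 1 by omega]
      rw [e1, e2]
      push_cast
      ring

/-- The number of maps `M : {1,…,k} → {1,…,k'}` with `M i ≤ M (i+1)` and
`M i ≤ k' - k + i` equals `((k'-k+1)/(k'+1)) * binom(k+k', k)`.
(Maps are encoded with `0`-based indices: `M : Fin k → Fin k'`, monotonicity,
and the bound `M i + 1 ≤ k' - k + (i + 1)`, i.e. `(M i) + k ≤ k' + i`.) -/
theorem count_admissible_maps (k k' : ℕ) (h : k ≤ k') :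
    (Nat.card {M : Fin k → Fin k' //
        (∀ i j : Fin k, i ≤ j → M i ≤ M j) ∧
        ∀ i : Fin k, (M i : ℕ) + k ≤ k' + (i : ℕ)} : ℚ) =
      (((k' : ℚ) - (k : ℚ) + 1) / ((k' : ℚ) + 1)) * (Nat.choose (k + k') k : ℚ) := by
  show (Nat.card {M : Fin k → Fin k' // Adm k k' M} : ℚ) = _
  have hc := card_formula k k' h
  have key : ((k + k').choose (k' + 1)) * (k' + 1) = k * ((k + k').choose k) := by
    have h1 := Nat.choose_succ_right_eq (k + k') k'
    rw [Nat.add_sub_cancel] at h1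
    have h2 : (k + k').choose k' = (k + k').choose k := (Nat.choose_symm_add ..).symm
    rw [h1, h2, mul_comm]
  have hq : (Nat.card {M : Fin k → Fin k' // Adm k k' M} : ℚ) =
      ((k + k').choose k : ℚ) - ((k + k').choose (k' + 1) : ℚ) := by
    exact_mod_cast hc
  have keyQ : ((k + k').choose (k' + 1) : ℚ) * ((k' : ℚ) + 1) =
      (k : ℚ) * ((k + k').choose k : ℚ) := by exact_mod_cast key
  rw [hq, div_mul_eq_mul_div, eq_div_iff (by positivity : ((k' : ℚ) + 1) ≠ 0)]
  linear_combination -keyQ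
end

section
/- Let n ≥ 1 and 0 ≤ r ≤ n be integers and let x_1, …, x_n be real numbers, with x_0 := 0. Then Σ_λ [∏_{j=1}^n 1/m_j(λ)!] · [∏_{i=1}^r (n−λ_i−i+2)(x_{λ_i} − x_{λ_i−1})] = e_r(x_1,…,x_n), where the sum is over all partitions λ = (λ_1 ≥ λ_2 ≥ ⋯ ≥ λ_r ≥ 1) with exactly r parts and λ_1 ≤ n, m_j(λ) denotes the number of indices i with λ_i = j, and e_r is the r-th elementary symmetric polynomial e_r(x) = Σ_{1≤i_1<⋯<i_r≤n} x_{i_1}⋯x_{i_r} (with e_0 = 1). -/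
/-!
Write `d_j = x_j - x_{j-1}`. In a summand, a block of `s` parts equal to `b + 1` sitting on top
of a partition `μ` with parts `≤ b` contributes `∏_{t<s} (K - t) / s! · d_{b+1}^s = C(K, s) d_{b+1}^s`,
where `K` is the number of free slots at level `b + 1`, and shifts the remaining positions by `s`.
Peeling off the top block therefore gives a recursion in the bound `b` of the parts. The same
recursion governs the coefficients of `∏_{i < N} (1 + x_{min(i, b)} t)`, because
`(1 + x_{b+1} t)^K = ((1 + x_b t) + d_{b+1} t)^K` expands binomially. At `b = n` this polynomial
is `∏_{i=1}^n (1 + x_i t)` (as `x_0 = 0`), whose `t^r`-coefficient is `e_r`.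
-/

open Finset Polynomial

theorem Antitone.le_apply_iff_lt_card {α : Type*} [Preorder α] [DecidableLE α] {ρ : ℕ}
    {l : Fin ρ → α} (hl : Antitone l) (v : α) (i : Fin ρ) :
    v ≤ l i ↔ (i : ℕ) < #{k | v ≤ l k} := by
  constructor
  · intro hi
    have : Iic i ⊆ univ.filter (v ≤ l ·) := fun k hk =>
      mem_filter.2 ⟨mem_univ _, hi.trans (hl (mem_Iic.1 hk))⟩
    have := Fin.card_Iic i ▸ card_le_card this
    omega
  · intro hi
    by_contra hvi
    have : univ.filter (v ≤ l ·) ⊆ Iio i := fun k hk => by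
      rw [mem_Iio]
      by_contra hik
      exact hvi ((mem_filter.1 hk).2.trans (hl (not_lt.1 hik)))
    have := Fin.card_Iio i ▸ card_le_card this
    omega

def replicateAppend {α : Type*} {ρ : ℕ} (s : ℕ) (a : α) (l : Fin (ρ - s) → α) : Fin ρ → α :=
  fun i => if h : (i : ℕ) < s then a else l ⟨i - s, by omega⟩

def dropFirst {α : Type*} {ρ : ℕ} (l : Fin ρ → α) (s : ℕ) : Fin (ρ - s) → α :=
  fun i => l ⟨i + s, by omega⟩

section replicateAppend

variable {α : Type*} {ρ s : ℕ} {a : α} {l : Fin (ρ - s) → α}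

@[to_additive]
theorem prod_replicateAppend {M : Type*} [CommMonoid M] (hs : s ≤ ρ) (g : α → ℕ → M) :
    ∏ i, g (replicateAppend s a l i) i = (∏ t ∈ range s, g a t) * ∏ i, g (l i) (s + i) := by
  rw [← (finCongr (Nat.add_sub_of_le hs)).prod_comp, Fin.prod_univ_add,
    ← Fin.prod_univ_eq_prod_range]
  congr 1 <;> refine Fintype.prod_congr _ _ fun i => ?_ <;> simp [replicateAppend]

theorem card_filter_replicateAppend_eq [DecidableEq α] (hs : s ≤ ρ) (v : α) :
    #{i | replicateAppend s a l i = v} = (if a = v then s else 0) + #{i | l i = v} := by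
  simp only [card_filter, sum_replicateAppend hs (fun w _ => if w = v then 1 else 0)]
  split_ifs <;> simp

theorem dropFirst_replicateAppend : dropFirst (replicateAppend s a l) s = l := by
  funext i
  simp [dropFirst, replicateAppend]

end replicateAppend

def boundedPartitions (b ρ : ℕ) : Finset (Fin ρ → ℕ) :=
  {l ∈ Fintype.piFinset fun _ => Icc 1 b | Antitone l}

theorem mem_boundedPartitions {b ρ : ℕ} {l : Fin ρ → ℕ} :
    l ∈ boundedPartitions b ρ ↔ Antitone l ∧ ∀ i, l i ∈ Icc 1 b := by
  simp [boundedPartitions, and_comm]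

section boundedPartitions

variable {b ρ s : ℕ}

theorem replicateAppend_mem_boundedPartitions {l : Fin (ρ - s) → ℕ}
    (hl : l ∈ boundedPartitions b (ρ - s)) :
    replicateAppend s (b + 1) l ∈ boundedPartitions (b + 1) ρ := by
  obtain ⟨hmono, hbound⟩ := mem_boundedPartitions.1 hl
  have hle : ∀ i, l i ≤ b := fun i => (mem_Icc.1 (hbound i)).2
  refine mem_boundedPartitions.2 ⟨fun i j hij => ?_, fun i => ?_⟩
  · rw [Fin.le_def] at hij
    unfold replicateAppend
    split_ifs with hj hi hi
    · exact le_rfl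
    · omega
    · exact (hle _).trans (Nat.le_succ b)
    · exact hmono (Fin.mk_le_mk.2 (by omega))
  · unfold replicateAppend
    split_ifs
    · simp
    · exact mem_Icc.2 ⟨(mem_Icc.1 (hbound _)).1, (hle _).trans (Nat.le_succ b)⟩

theorem card_filter_replicateAppend_eq_succ {l : Fin (ρ - s) → ℕ} (hs : s ≤ ρ)
    (hl : l ∈ boundedPartitions b (ρ - s)) :
    #{i | replicateAppend s (b + 1) l i = b + 1} = s := by
  rw [card_filter_replicateAppend_eq hs, if_pos rfl, add_eq_left, card_eq_zero,
    filter_eq_empty_iff]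
  intro i _
  have := mem_Icc.1 ((mem_boundedPartitions.1 hl).2 i)
  omega

theorem apply_eq_succ_iff_lt_card {l : Fin ρ → ℕ} (hl : l ∈ boundedPartitions (b + 1) ρ)
    (i : Fin ρ) : l i = b + 1 ↔ (i : ℕ) < #{k | l k = b + 1} := by
  obtain ⟨hmono, hbound⟩ := mem_boundedPartitions.1 hl
  have heq : ∀ k, l k = b + 1 ↔ b + 1 ≤ l k := fun k => by
    have := mem_Icc.1 (hbound k)
    omega
  rw [heq i, hmono.le_apply_iff_lt_card]
  simp only [← heq]

theorem dropFirst_mem_boundedPartitions {l : Fin ρ → ℕ} (hl : l ∈ boundedPartitions (b + 1) ρ)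
    (hs : #{k | l k = b + 1} = s) : dropFirst l s ∈ boundedPartitions b (ρ - s) := by
  obtain ⟨hmono, hbound⟩ := mem_boundedPartitions.1 hl
  refine mem_boundedPartitions.2
    ⟨fun i j hij => hmono (Fin.mk_le_mk.2 (by simpa using hij)), fun i => ?_⟩
  have hlow := (apply_eq_succ_iff_lt_card hl ⟨i + s, by omega⟩).not.2 (by simp [hs])
  have := mem_Icc.1 (hbound ⟨i + s, by omega⟩)
  simp only [dropFirst, mem_Icc]
  omega

theorem replicateAppend_dropFirst {l : Fin ρ → ℕ} (hl : l ∈ boundedPartitions (b + 1) ρ)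
    (hs : #{k | l k = b + 1} = s) : replicateAppend s (b + 1) (dropFirst l s) = l := by
  funext i
  unfold replicateAppend dropFirst
  split_ifs with hi
  · exact ((apply_eq_succ_iff_lt_card hl i).2 (hs ▸ hi)).symm
  · congr 1
    ext
    simp only
    omega

end boundedPartitions

theorem sum_boundedPartitions_succ {M : Type*} [AddCommMonoid M] (b ρ : ℕ)
    (f : (Fin ρ → ℕ) → M) :
    ∑ l ∈ boundedPartitions (b + 1) ρ, f l =
      ∑ s ∈ range (ρ + 1), ∑ l ∈ boundedPartitions b (ρ - s), f (replicateAppend s (b + 1) l) := by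
  rw [← sum_fiberwise_of_maps_to (g := fun l => #{i | l i = b + 1}) (t := range (ρ + 1))
    fun l _ => mem_range.2 (Nat.lt_succ_of_le ((card_le_univ _).trans_eq (Fintype.card_fin ρ)))]
  refine sum_congr rfl fun s hs => ?_
  have hsρ : s ≤ ρ := Nat.le_of_lt_succ (mem_range.1 hs)
  symm
  refine sum_nbij' (replicateAppend s (b + 1)) (dropFirst · s) (fun l hl => ?_) (fun l hl => ?_)
    (fun _ _ => dropFirst_replicateAppend) (fun l hl => ?_) fun _ _ => rfl
  · exact mem_filter.2
      ⟨replicateAppend_mem_boundedPartitions hl, card_filter_replicateAppend_eq_succ hsρ hl⟩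
  · exact dropFirst_mem_boundedPartitions (mem_filter.1 hl).1 (mem_filter.1 hl).2
  · exact replicateAppend_dropFirst (mem_filter.1 hl).1 (mem_filter.1 hl).2

/-- `N` stands for `n + 1` and positions are `0`-based, so `N - l i - i` is the paper's
`n - λ_i - i + 2`; `N` is real so that it can drop by `s` when a top block of `s` parts is
removed. -/
noncomputable def partitionWeight (x : ℕ → ℝ) (N : ℝ) (b : ℕ) {ρ : ℕ} (l : Fin ρ → ℕ) : ℝ :=
  (∏ j ∈ Icc 1 b, (1 : ℝ) / (#{i | l i = j}).factorial) *
    ∏ i, (N - l i - i) * (x (l i) - x (l i - 1))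

theorem partitionWeight_replicateAppend (x : ℕ → ℝ) (N : ℝ) {b ρ s : ℕ} (hs : s ≤ ρ)
    {l : Fin (ρ - s) → ℕ} (hl : l ∈ boundedPartitions b (ρ - s)) :
    partitionWeight x N (b + 1) (replicateAppend s (b + 1) l) =
      (∏ t ∈ range s, (N - (b + 1) - t)) / s.factorial * (x (b + 1) - x b) ^ s *
        partitionWeight x (N - s) b l := by
  have hcard : ∀ j ∈ Icc 1 b, #{i | replicateAppend s (b + 1) l i = j} = #{i | l i = j} :=
    fun j hj => by
      rw [card_filter_replicateAppend_eq hs, if_neg (by have := (mem_Icc.1 hj).2; omega),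
        zero_add]
  have hshift : ∀ i : Fin (ρ - s), (N - l i - (s + i : ℕ)) * (x (l i) - x (l i - 1)) =
      (N - s - l i - i) * (x (l i) - x (l i - 1)) :=
    fun i => by push_cast; ring
  unfold partitionWeight
  rw [prod_Icc_succ_top (by omega), card_filter_replicateAppend_eq_succ hs hl,
    prod_congr rfl fun j hj => by rw [hcard j hj],
    prod_replicateAppend hs (fun v t => (N - v - t) * (x v - x (v - 1)))]
  simp only [hshift, prod_mul_distrib, prod_const, card_range, Nat.add_sub_cancel]
  push_cast
  ring

theorem sum_partitionWeight_zero (x : ℕ → ℝ) (N : ℝ) (ρ : ℕ) :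
    ∑ l ∈ boundedPartitions 0 ρ, partitionWeight x N 0 l = if ρ = 0 then 1 else 0 := by
  rcases ρ with _ | ρ
  · have : boundedPartitions 0 0 = {Fin.elim0} :=
      eq_singleton_iff_unique_mem.2
        ⟨mem_boundedPartitions.2 ⟨fun i => i.elim0, fun i => i.elim0⟩,
          fun _ _ => funext fun i => i.elim0⟩
    simp [this, partitionWeight]
  · have : boundedPartitions 0 (ρ + 1) = ∅ :=
      eq_empty_of_forall_notMem fun l hl => by simpa using (mem_boundedPartitions.1 hl).2 0
    simp [this]

theorem sum_partitionWeight_succ (x : ℕ → ℝ) (N : ℝ) (b ρ : ℕ) :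
    ∑ l ∈ boundedPartitions (b + 1) ρ, partitionWeight x N (b + 1) l =
      ∑ s ∈ range (ρ + 1),
        (∏ t ∈ range s, (N - (b + 1) - t)) / s.factorial * (x (b + 1) - x b) ^ s *
          ∑ l ∈ boundedPartitions b (ρ - s), partitionWeight x (N - s) b l := by
  rw [sum_boundedPartitions_succ]
  refine sum_congr rfl fun s hs => ?_
  rw [mul_sum]
  exact sum_congr rfl fun l hl =>
    partitionWeight_replicateAppend x N (Nat.le_of_lt_succ (mem_range.1 hs)) hl

/-- For `b ≤ N` this is `∏_{i < N} (1 + x_{min(i, b)} X)`. -/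
noncomputable def levelPoly (x : ℕ → ℝ) (N b : ℕ) : ℝ[X] :=
  (1 + C (x b) * X) ^ (N - b) * ∏ j ∈ range b, (1 + C (x j) * X)

theorem levelPoly_succ (x : ℕ → ℝ) {N b : ℕ} (h : b + 1 ≤ N) :
    levelPoly x N (b + 1) = ∑ s ∈ range (N - (b + 1) + 1),
      C ((N - (b + 1)).choose s * (x (b + 1) - x b) ^ s) * X ^ s * levelPoly x (N - s) b := by
  have hsplit : 1 + C (x (b + 1)) * X = C (x (b + 1) - x b) * X + (1 + C (x b) * X) := by
    rw [C_sub]; ring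
  rw [levelPoly, hsplit, add_pow, sum_mul, prod_range_succ]
  refine sum_congr rfl fun s hs => ?_
  have hsK : s ≤ N - (b + 1) := Nat.le_of_lt_succ (mem_range.1 hs)
  rw [levelPoly, show N - s - b = N - (b + 1) - s + 1 by omega, C_mul, C_pow, C_eq_natCast]
  ring

theorem coeff_levelPoly_succ (x : ℕ → ℝ) {N b : ℕ} (h : b + 1 ≤ N) (ρ : ℕ) :
    (levelPoly x N (b + 1)).coeff ρ = ∑ s ∈ range (ρ + 1),
      (N - (b + 1)).choose s * (x (b + 1) - x b) ^ s * (levelPoly x (N - s) b).coeff (ρ - s) := by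
  simp only [levelPoly_succ x h, finsetSum_coeff, mul_assoc, coeff_C_mul, coeff_X_pow_mul',
    mul_ite, mul_zero]
  rw [← sum_filter]
  refine sum_subset (fun s hs => ?_) fun s hs hs' => ?_
  · simp only [mem_filter, mem_range] at hs ⊢
    omega
  · simp only [mem_filter, mem_range, not_and, not_le] at hs hs'
    rw [Nat.choose_eq_zero_of_lt (by omega), Nat.cast_zero, zero_mul]

theorem sum_partitionWeight_eq_coeff_levelPoly (x : ℕ → ℝ) (hx0 : x 0 = 0) {b N : ℕ}
    (hbN : b ≤ N) (ρ : ℕ) :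
    ∑ l ∈ boundedPartitions b ρ, partitionWeight x N b l = (levelPoly x N b).coeff ρ := by
  induction b generalizing N ρ with
  | zero => simp [sum_partitionWeight_zero, levelPoly, hx0, coeff_one]
  | succ b ih =>
    rw [sum_partitionWeight_succ, coeff_levelPoly_succ x hbN]
    refine sum_congr rfl fun s _ => ?_
    have hchoose : (∏ t ∈ range s, ((N : ℝ) - (b + 1) - t)) / s.factorial =
        (N - (b + 1)).choose s := by
      rw [Nat.cast_choose_eq_descPochhammer_div, descPochhammer_eval_eq_prod_range,
        Nat.cast_sub hbN, Nat.cast_add_one]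
    rw [hchoose]
    by_cases hs : s ≤ N - (b + 1)
    · rw [← Nat.cast_sub (by omega), ih (by omega)]
    · rw [Nat.choose_eq_zero_of_lt (by omega)]
      simp

theorem levelPoly_add_one_self (x : ℕ → ℝ) (hx0 : x 0 = 0) (n : ℕ) :
    levelPoly x (n + 1) n = ∏ j ∈ Icc 1 n, (1 + C (x j) * X) := by
  rw [levelPoly, Nat.add_sub_cancel_left, pow_one, mul_comm, ← prod_range_succ,
    Nat.range_succ_eq_Icc_zero, Icc_eq_cons_Ioc (Nat.zero_le n), prod_cons, hx0, C_0, zero_mul,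
    add_zero, one_mul, ← Finset.Icc_succ_left_eq_Ioc, Nat.succ_eq_succ]

theorem coeff_prod_one_add_C_mul_X {ι R : Type*} [CommSemiring R] (A : Finset ι) (f : ι → R)
    (r : ℕ) : (∏ i ∈ A, (1 + C (f i) * X)).coeff r = ∑ S ∈ powersetCard r A, ∏ i ∈ S, f i := by
  classical
  simp_rw [add_comm (1 : R[X]), prod_add, prod_const_one, mul_one, prod_mul_distrib, prod_const,
    ← map_prod, finsetSum_coeff, coeff_C_mul_X_pow, powersetCard_eq_filter, sum_filter, eq_comm]

theorem partition_elementary_symmetric_identity_general (n r : ℕ)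
    (x : ℕ → ℝ) (hx0 : x 0 = 0) :
    (∑' lam : {l : Fin r → ℕ //
        (∀ i j : Fin r, i ≤ j → l j ≤ l i) ∧ ∀ i : Fin r, 1 ≤ l i ∧ l i ≤ n},
      (∏ j ∈ Finset.Icc 1 n,
          (1 : ℝ) / (Nat.factorial (Finset.univ.filter fun i : Fin r => lam.1 i = j).card)) *
        ∏ i : Fin r,
          ((n : ℝ) - (lam.1 i : ℝ) - ((i : ℕ) + 1 : ℝ) + 2) *
            (x (lam.1 i) - x (lam.1 i - 1))) =
      ∑ S ∈ Finset.powersetCard r (Finset.Icc 1 n), ∏ j ∈ S, x j := by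
  have hmem (l : Fin r → ℕ) :
      ((∀ i j : Fin r, i ≤ j → l j ≤ l i) ∧ ∀ i, 1 ≤ l i ∧ l i ≤ n) ↔
        l ∈ boundedPartitions n r := by
    simp only [mem_boundedPartitions, mem_Icc, Antitone]
  have hweight (l : Fin r → ℕ) :
      (∏ j ∈ Icc 1 n, (1 : ℝ) / (Nat.factorial #{i | l i = j})) *
          ∏ i : Fin r, ((n : ℝ) - l i - ((i : ℕ) + 1 : ℝ) + 2) * (x (l i) - x (l i - 1)) =
        partitionWeight x (n + 1 : ℕ) n l := by
    unfold partitionWeight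
    congr 1
    refine prod_congr rfl fun i _ => ?_
    push_cast
    ring
  simp only [hweight]
  refine ((Equiv.subtypeEquivRight hmem).tsum_eq
    fun l => partitionWeight x (n + 1 : ℕ) n l.1).trans ?_
  rw [Finset.tsum_subtype, sum_partitionWeight_eq_coeff_levelPoly x hx0 n.le_succ,
    levelPoly_add_one_self x hx0, coeff_prod_one_add_C_mul_X]

/-- The combinatorial identity
`Σ_λ [∏_{j=1}^n 1/m_j(λ)!]·[∏_{i=1}^r (n−λ_i−i+2)(x_{λ_i} − x_{λ_i−1})] = e_r(x_1,…,x_n)`,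
the sum being over partitions `λ = (λ_1 ≥ ⋯ ≥ λ_r ≥ 1)` with exactly `r` parts and
`λ_1 ≤ n`, where `x_0 = 0`.  Partitions are encoded as antitone functions
`Fin r → ℕ` with values in `[1, n]`. -/
theorem partition_elementary_symmetric_identity (n r : ℕ) (hn : 1 ≤ n) (hr : r ≤ n)
    (x : ℕ → ℝ) (hx0 : x 0 = 0) :
    (∑' lam : {l : Fin r → ℕ //
        (∀ i j : Fin r, i ≤ j → l j ≤ l i) ∧ ∀ i : Fin r, 1 ≤ l i ∧ l i ≤ n},
      (∏ j ∈ Finset.Icc 1 n,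
          (1 : ℝ) / (Nat.factorial (Finset.univ.filter fun i : Fin r => lam.1 i = j).card)) *
        ∏ i : Fin r,
          ((n : ℝ) - (lam.1 i : ℝ) - ((i : ℕ) + 1 : ℝ) + 2) *
            (x (lam.1 i) - x (lam.1 i - 1))) =
      ∑ S ∈ Finset.powersetCard r (Finset.Icc 1 n), ∏ j ∈ S, x j :=
  partition_elementary_symmetric_identity_general n r x hx0
end

section
/- Let n ≥ 0 be an integer and let t, x_0, x_1, …, x_n be real numbers. Then Σ over all (m_1,…,m_n) ∈ ℕ^n with m_1+⋯+m_n ≤ n of [(1+t·x_0)^{n−M_1}/(n−M_1)!] · ∏_{j=1}^n [t(x_j−x_{j−1})]^{m_j}·(n−j+1−M_{j+1})/m_j! = ∏_{i=1}^n (1+t·x_i), where M_j := m_j + m_{j+1} + ⋯ + m_n and M_{n+1} := 0. -/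
/-!
Put `c i = 1 + t x_i`, so that `t (x_j - x_{j-1}) = c_j - c_{j-1}`. Summing first over `m_1`, the
binomial theorem merges `c_0^{n-M_1}/(n-M_1)!` and `(c_1 - c_0)^{m_1}/m_1!` into
`c_1^{n-M_2}/(n-M_2)!`. Multiplied by the factor `n - M_2` of `j = 1`, this becomes
`c_1 · c_1^{n-1-M_2}/(n-1-M_2)!` (and vanishes when `M_2 = n`), i.e. `c_1` times the summand of the
same identity for `n - 1` and `c_1, …, c_n`. Induction on `n` concludes.
-/

open Finset
open scoped Nat

namespace BinomialMultisum

section Reindex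

variable {M : Type*} [CommMonoid M]

@[to_additive]
lemma prod_Icc_succ_eq_prod_Ico (g : ℕ → M) (a b : ℕ) :
    ∏ j ∈ Icc (a + 1) b, g j = ∏ k ∈ Ico a b, g (k + 1) := by
  rw [prod_Ico_add', Ico_add_one_right_eq_Icc]

@[to_additive]
lemma prod_Icc_eq_prod_fin_succ (g : ℕ → M) (n : ℕ) :
    ∏ j ∈ Icc 1 n, g j = ∏ i : Fin n, g (i + 1) := by
  rw [← zero_add 1, prod_Icc_succ_eq_prod_Ico, ← range_eq_Ico,
    Fin.prod_univ_eq_prod_range (fun i => g (i + 1))]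

lemma sum_Icc_add_two_eq_sum_Ioi_fin {A : Type*} [AddCommMonoid A] (g : ℕ → A) {n : ℕ}
    (i : Fin n) : ∑ j ∈ Icc ((i : ℕ) + 1 + 1) n, g j = ∑ k > i, g (k + 1) := by
  rw [sum_Icc_succ_eq_sum_Ico, Ico_add_one_left_eq_Ioo, ← Fin.map_valEmbedding_Ioi, sum_map]
  rfl

end Reindex

def boundedTuples (n N : ℕ) : Finset (Fin n → ℕ) :=
  {v ∈ Fintype.piFinset fun _ => range (N + 1) | ∑ i, v i ≤ N}

lemma mem_boundedTuples {n N : ℕ} {v : Fin n → ℕ} :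
    v ∈ boundedTuples n N ↔ ∑ i, v i ≤ N := by
  simp only [boundedTuples, mem_filter, Fintype.mem_piFinset, mem_range, and_iff_right_iff_imp]
  exact fun h i =>
    Nat.lt_succ_of_le ((single_le_sum (fun _ _ => Nat.zero_le _) (mem_univ i)).trans h)

lemma boundedTuples_mono (n : ℕ) : Monotone (boundedTuples n) :=
  fun _ _ hNM _ hv => mem_boundedTuples.2 ((mem_boundedTuples.1 hv).trans hNM)

lemma sum_boundedTuples_succ {A : Type*} [AddCommMonoid A] (n N : ℕ)
    (f : (Fin (n + 1) → ℕ) → A) :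
    ∑ v ∈ boundedTuples (n + 1) N, f v =
      ∑ w ∈ boundedTuples n N, ∑ k ∈ range (N - ∑ i, w i + 1), f (Fin.cons k w) := by
  rw [sum_sigma']
  refine sum_bij' (fun v _ => ⟨Fin.tail v, v 0⟩) (fun p _ => Fin.cons p.2 p.1) ?_ ?_ ?_ ?_ ?_
  · intro v hv
    rw [mem_boundedTuples, Fin.sum_univ_succ] at hv
    simp only [mem_sigma, mem_boundedTuples, mem_range, Fin.tail]
    omega
  · rintro ⟨w, k⟩ hp
    simp only [mem_sigma, mem_boundedTuples, mem_range] at hp ⊢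
    rw [Fin.sum_cons]
    omega
  · exact fun v _ => Fin.cons_self_tail v
  · rintro ⟨w, k⟩ _
    simp
  · intro v _
    rw [Fin.cons_self_tail]

def supportedTuplesEquiv (n : ℕ) :
    {m : ℕ → ℕ // (∀ j, (j = 0 ∨ n < j) → m j = 0) ∧ ∑ j ∈ Icc 1 n, m j ≤ n} ≃
      boundedTuples n n where
  toFun m :=
    ⟨fun i => m.1 (i + 1), by rw [mem_boundedTuples, ← sum_Icc_eq_sum_fin_succ]; exact m.2.2⟩
  invFun v := ⟨fun j => if h : j ≠ 0 ∧ j - 1 < n then v.1 ⟨j - 1, h.2⟩ else 0, by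
    refine ⟨fun j hj => dif_neg (by omega), ?_⟩
    rw [sum_Icc_eq_sum_fin_succ]
    simpa using mem_boundedTuples.1 v.2⟩
  left_inv m := by
    ext j
    dsimp only
    split_ifs with h
    · rw [Nat.sub_add_cancel (Nat.pos_of_ne_zero h.1)]
    · exact (m.2.1 j (by omega)).symm
  right_inv v := by
    ext i
    simp

lemma tsum_supportedTuples_eq_sum_boundedTuples {A : Type*} [AddCommMonoid A]
    [TopologicalSpace A] (n : ℕ) (f : (Fin n → ℕ) → A) :
    ∑' m : {m : ℕ → ℕ // (∀ j, (j = 0 ∨ n < j) → m j = 0) ∧ ∑ j ∈ Icc 1 n, m j ≤ n},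
        f (fun i => m.1 (i + 1)) =
      ∑ v ∈ boundedTuples n n, f v :=
  (Equiv.tsum_eq (supportedTuplesEquiv n) (f ∘ Subtype.val)).trans (tsum_subtype _ f)

section Field

variable {K : Type*} [Field K]

/-- The product over `j` in the identity, for `c i = 1 + t x_i` and `v i = m_{i+1}`; its factor
`n - i - ∑_{k > i} v k` is `n - j + 1 - M_{j+1}` at `j = i + 1`. -/
noncomputable def weight (c : ℕ → K) {n : ℕ} (v : Fin n → ℕ) : K :=
  ∏ i : Fin n, (c (i + 1) - c i) ^ v i * ((n : K) - i - ∑ k > i, (v k : K)) / (v i)!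

lemma prod_Icc_eq_weight (c : ℕ → K) (n : ℕ) (m : ℕ → ℕ) :
    ∏ j ∈ Icc 1 n, (c j - c (j - 1)) ^ m j *
        ((n : K) - j + 1 - (∑ i ∈ Icc (j + 1) n, m i : ℕ)) / (m j)! =
      weight c (fun i : Fin n => m (i + 1)) := by
  rw [prod_Icc_eq_prod_fin_succ, weight]
  refine prod_congr rfl fun i _ => ?_
  rw [sum_Icc_add_two_eq_sum_Ioi_fin, Nat.add_sub_cancel]
  push_cast
  ring

lemma weight_cons (c : ℕ → K) {n : ℕ} (k : ℕ) (w : Fin n → ℕ) :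
    weight c (Fin.cons k w : Fin (n + 1) → ℕ) =
      (c 1 - c 0) ^ k / k ! * ((n + 1 - ∑ i, (w i : K)) * weight (fun j => c (j + 1)) w) := by
  simp only [weight, Fin.prod_univ_succ, Fin.cons_zero, Fin.cons_succ, Fin.sum_Ioi_zero,
    Fin.sum_Ioi_succ, Fin.val_zero, Fin.val_succ, Nat.cast_add, Nat.cast_one, Nat.cast_zero,
    add_sub_add_right_eq_sub, sub_zero]
  ring

variable [CharZero K]

lemma sum_range_pow_div_factorial_mul (a b : K) (N : ℕ) :
    ∑ k ∈ range (N + 1), a ^ (N - k) / (N - k)! * (b ^ k / k !) = (a + b) ^ N / N ! := by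
  rw [add_comm a b, add_pow, sum_div]
  refine sum_congr rfl fun k hk => ?_
  rw [Nat.cast_choose K (Nat.lt_succ_iff.1 (mem_range.1 hk))]
  have := N.factorial_ne_zero
  field_simp

lemma pow_div_factorial_mul_succ_sub (b : K) {n s : ℕ} (hs : s ≤ n + 1) :
    b ^ (n + 1 - s) / (n + 1 - s)! * ((n : K) + 1 - s) =
      if s ≤ n then b * (b ^ (n - s) / (n - s)!) else 0 := by
  split_ifs with h
  · obtain ⟨N, rfl⟩ := Nat.exists_eq_add_of_le h
    rw [show s + N + 1 - s = N + 1 by omega, Nat.add_sub_cancel_left, Nat.factorial_succ,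
      pow_succ]
    push_cast
    field_simp
    ring
  · rw [show (s : K) = n + 1 by exact_mod_cast (by omega : s = n + 1), sub_self, mul_zero]

lemma sum_range_mul_weight_cons (c : ℕ → K) (n N : ℕ) (w : Fin n → ℕ) :
    ∑ k ∈ range (N - ∑ i, w i + 1),
        c 0 ^ (N - ∑ i, (Fin.cons k w : Fin (n + 1) → ℕ) i) /
          (N - ∑ i, (Fin.cons k w : Fin (n + 1) → ℕ) i)! * weight c (Fin.cons k w) =
      c 1 ^ (N - ∑ i, w i) / (N - ∑ i, w i)! *
        ((n + 1 - ∑ i, (w i : K)) * weight (fun j => c (j + 1)) w) := by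
  have hexp : ∀ k, N - (k + ∑ i, w i) = N - ∑ i, w i - k := fun k => by omega
  simp only [Fin.sum_cons, weight_cons, hexp, ← mul_assoc, ← sum_mul]
  rw [sum_range_pow_div_factorial_mul, add_sub_cancel]

theorem sum_boundedTuples_eq_prod (c : ℕ → K) (n : ℕ) :
    ∑ v ∈ boundedTuples n n, c 0 ^ (n - ∑ i, v i) / (n - ∑ i, v i)! * weight c v =
      ∏ i : Fin n, c (i + 1) := by
  induction n generalizing c with
  | zero => simp [boundedTuples, weight]
  | succ n ih =>
    set c' : ℕ → K := fun j => c (j + 1)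
    have vanish : ∀ w ∈ boundedTuples n (n + 1),
        c 1 ^ (n + 1 - ∑ i, w i) / (n + 1 - ∑ i, w i)! *
            ((n + 1 - ∑ i, (w i : K)) * weight c' w) =
          if w ∈ boundedTuples n n then
            c 1 * (c' 0 ^ (n - ∑ i, w i) / (n - ∑ i, w i)! * weight c' w)
          else 0 := by
      intro w hw
      rw [← Nat.cast_sum, ← mul_assoc, pow_div_factorial_mul_succ_sub _ (mem_boundedTuples.1 hw)]
      by_cases h : w ∈ boundedTuples n n
      · rw [if_pos (mem_boundedTuples.1 h), if_pos h, mul_assoc]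
      · rw [if_neg (mt mem_boundedTuples.2 h), if_neg h, zero_mul]
    rw [sum_boundedTuples_succ, sum_congr rfl fun w _ => sum_range_mul_weight_cons c n (n + 1) w,
      sum_congr rfl vanish, ← sum_filter, filter_mem_eq_inter,
      inter_eq_right.2 (boundedTuples_mono n n.le_succ), ← mul_sum, ih, Fin.prod_univ_succ]
    rfl

end Field

end BinomialMultisum

/-- The identity
`Σ_{(m_1,…,m_n) ∈ ℕ^n, m_1+⋯+m_n ≤ n} (1+t x_0)^{n−M_1}/(n−M_1)! ·
  ∏_{j=1}^n [t(x_j−x_{j−1})]^{m_j}(n−j+1−M_{j+1})/m_j! = ∏_{i=1}^n (1+t x_i)`,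
where `M_j = m_j + ⋯ + m_n`.  Tuples are encoded as functions `m : ℕ → ℕ`
supported on `[1, n]`, and `M j = Σ_{i ∈ [j, n]} m i` (so `M (n+1) = 0`). -/
theorem binomial_multisum_identity (n : ℕ) (t : ℝ) (x : ℕ → ℝ) :
    (∑' m : {m : ℕ → ℕ //
        (∀ j, (j = 0 ∨ n < j) → m j = 0) ∧ ∑ j ∈ Finset.Icc 1 n, m j ≤ n},
      (1 + t * x 0) ^ (n - ∑ j ∈ Finset.Icc 1 n, m.1 j) /
          (Nat.factorial (n - ∑ j ∈ Finset.Icc 1 n, m.1 j) : ℝ) *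
        ∏ j ∈ Finset.Icc 1 n,
          (t * (x j - x (j - 1))) ^ (m.1 j) *
            ((n : ℝ) - (j : ℝ) + 1 - (∑ i ∈ Finset.Icc (j + 1) n, m.1 i : ℕ)) /
              (Nat.factorial (m.1 j) : ℝ)) =
      ∏ i ∈ Finset.Icc 1 n, (1 + t * x i) := by
  set c : ℕ → ℝ := fun i => 1 + t * x i
  have hdiff : ∀ j, t * (x j - x (j - 1)) = c j - c (j - 1) := fun j => by simp only [c]; ring
  simp_rw [hdiff, BinomialMultisum.prod_Icc_eq_weight, BinomialMultisum.sum_Icc_eq_sum_fin_succ]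
  rw [BinomialMultisum.prod_Icc_eq_prod_fin_succ]
  exact (BinomialMultisum.tsum_supportedTuples_eq_sum_boundedTuples n _).trans
    (BinomialMultisum.sum_boundedTuples_eq_prod c n)
end

section
/- Let u, v ∈ ℝ with sin(πv) ≠ 0. Then lim_{q→1⁻} [(1−q^u) ∏_{j=1}^∞ (1−q^{j+u})(1−q^{j−u})] / [(1−q^v) ∏_{j=1}^∞ (1−q^{j+v})(1−q^{j−v})] = sin(πu)/sin(πv), the limit being taken over real q with 0 < q < 1. -/
/-!
Write `q = exp (-2s)`. Since `1 - q ^ x = 2 e^{-sx} sinh (s x)` and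
`sinh (x + y) sinh (x - y) = sinh² x - sinh² y`, the `j`-th factor of the product is
`(1 - q ^ c) ^ 2 (1 - (sinh (s a) / sinh (s c)) ^ 2)` with `c = j + 1`, and the
`q`-Pochhammer part `(1 - q) ∏ (1 - q ^ c) ^ 2` cancels in the ratio. As `s → 0⁺` the
normalised factors tend to `1 - a² / c²`, and for `s ≤ 1` they differ from `1` by at most
`(|a| e^{|a|} / c) ^ 2`. Dominated convergence for infinite products, `(1 - q ^ a) / (1 - q) → a`
and Euler's product `sin (π a) = π a ∏ (1 - a² / c²)` then show that the normalised numerator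
tends to `sin (π a) / π`.
-/

open Filter Real Set Topology

theorem tendsto_one_sub_rpow_div_one_sub (a : ℝ) :
    Tendsto (fun q : ℝ => (1 - q ^ a) / (1 - q)) (𝓝[≠] 1) (𝓝 a) := by
  have h := hasDerivAt_iff_tendsto_slope.mp
    (hasDerivAt_rpow_const (x := 1) (p := a) (.inl one_ne_zero))
  rw [one_rpow, mul_one] at h
  refine h.congr fun q => ?_
  rw [slope_def_field, one_rpow, ← neg_div_neg_eq, neg_sub, neg_sub]

noncomputable def qSineFactor (c a q : ℝ) : ℝ :=
  (1 - q ^ (c + a)) * (1 - q ^ (c - a)) / (1 - q ^ c) ^ 2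

theorem tendsto_qSineFactor (a : ℝ) {c : ℝ} (hc : c ≠ 0) :
    Tendsto (qSineFactor c a) (𝓝[≠] 1) (𝓝 (1 - a ^ 2 / c ^ 2)) := by
  have h := ((tendsto_one_sub_rpow_div_one_sub (c + a)).mul
    (tendsto_one_sub_rpow_div_one_sub (c - a))).div
    ((tendsto_one_sub_rpow_div_one_sub c).pow 2) (pow_ne_zero 2 hc)
  rw [show (c + a) * (c - a) / c ^ 2 = 1 - a ^ 2 / c ^ 2 by field_simp; ring] at h
  refine h.congr' (eventually_nhdsWithin_of_forall fun q hq => ?_)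
  have : (1 : ℝ) - q ≠ 0 := sub_ne_zero.mpr (Ne.symm hq)
  simp only [Pi.div_apply]
  rw [qSineFactor, div_pow, div_mul_div_comm, ← sq,
    div_div_div_cancel_right₀ (pow_ne_zero 2 this)]

theorem one_sub_exp_neg_two_mul (y : ℝ) : 1 - exp (-(2 * y)) = 2 * exp (-y) * sinh y := by
  rw [sinh_eq, show -(2 * y) = -y + -y by ring, exp_add]
  field_simp
  rw [mul_sub, ← exp_add, neg_add_cancel, exp_zero, sq]

theorem sinh_add_mul_sinh_sub (x y : ℝ) :
    sinh (x + y) * sinh (x - y) = sinh x ^ 2 - sinh y ^ 2 := by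
  rw [sinh_add, sinh_sub]
  linear_combination sinh x ^ 2 * cosh_sq' y - sinh y ^ 2 * cosh_sq' x

theorem qSineFactor_exp_neg_two_mul {s c : ℝ} (hs : s ≠ 0) (hc : c ≠ 0) (a : ℝ) :
    qSineFactor c a (exp (-(2 * s))) = 1 - (sinh (s * a) / sinh (s * c)) ^ 2 := by
  have hsc : sinh (s * c) ≠ 0 := sinh_ne_zero.mpr (mul_ne_zero hs hc)
  have hexp (x : ℝ) : exp (-(2 * s)) ^ x = exp (-(2 * (s * x))) := by rw [← exp_mul]; ring_nf
  have hprod : exp (-(s * (c + a))) * exp (-(s * (c - a))) = exp (-(s * c)) ^ 2 := by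
    rw [← exp_add, sq, ← exp_add]; ring_nf
  have hsinh := sinh_add_mul_sinh_sub (s * c) (s * a)
  rw [← mul_add, ← mul_sub] at hsinh
  simp only [qSineFactor, hexp, one_sub_exp_neg_two_mul]
  field_simp
  linear_combination
    sinh (s * (c + a)) * sinh (s * (c - a)) * hprod + exp (-(s * c)) ^ 2 * hsinh

theorem sinh_le_mul_exp {y : ℝ} (hy : 0 ≤ y) : sinh y ≤ y * exp y := by
  have h₁ := add_one_le_exp (-y)
  have h₂ : exp y * exp (-y) = 1 := by rw [← exp_add, add_neg_cancel, exp_zero]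
  have h₃ := one_le_exp hy
  rw [sinh_eq]
  nlinarith

theorem sq_sinh_mul_div_sinh_mul_le (a : ℝ) {s c : ℝ} (hs : 0 < s) (hc : 0 < c) :
    (sinh (s * a) / sinh (s * c)) ^ 2 ≤ (|a| * exp (s * |a|) / c) ^ 2 := by
  have hsc : 0 < sinh (s * c) := sinh_pos_iff.mpr (mul_pos hs hc)
  refine sq_le_sq.mpr ?_
  rw [abs_div, abs_div, abs_sinh, abs_mul, abs_of_pos hs, abs_of_pos hsc, abs_of_pos hc, abs_mul,
    abs_abs, abs_of_pos (exp_pos _), div_le_div_iff₀ hsc hc]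
  calc sinh (s * |a|) * c ≤ s * |a| * exp (s * |a|) * c := by
        gcongr; exact sinh_le_mul_exp (by positivity)
    _ = |a| * exp (s * |a|) * (s * c) := by ring
    _ ≤ |a| * exp (s * |a|) * sinh (s * c) := by
        gcongr; exact self_le_sinh_iff.mpr (by positivity)

theorem summable_sq_div_nat_add_one (b : ℝ) :
    Summable fun j : ℕ => (b / ((j : ℝ) + 1)) ^ 2 := by
  refine (summable_pow_div_add (b ^ 2) 2 1 one_lt_two).congr fun j => ?_
  rw [Real.norm_eq_abs, abs_of_nonneg (by positivity), Nat.cast_one, div_pow]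

section qParameter

variable {q : ℝ}

theorem abs_qSineFactor_sub_one_le (hq0 : 0 < q) (hq1 : q < 1) (a : ℝ) {c : ℝ} (hc : 0 < c) :
    |qSineFactor c a q - 1| ≤ (|a| * exp (-log q / 2 * |a|) / c) ^ 2 := by
  set s := -log q / 2
  have hs : 0 < s := div_pos (neg_pos.mpr (log_neg hq0 hq1)) two_pos
  have hq : exp (-(2 * s)) = q := by
    rw [show -(2 * s) = log q by simp only [s]; ring, exp_log hq0]
  rw [← hq, qSineFactor_exp_neg_two_mul hs.ne' hc.ne', sub_sub_cancel_left, abs_neg, abs_sq]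
  exact sq_sinh_mul_div_sinh_mul_le a hs hc

theorem multipliable_qSineFactor (hq0 : 0 < q) (hq1 : q < 1) (a : ℝ) :
    Multipliable fun j : ℕ => qSineFactor ((j : ℝ) + 1) a q := by
  have := Real.multipliable_one_add_of_summable
    (f := fun j : ℕ => qSineFactor ((j : ℝ) + 1) a q - 1)
    ((summable_sq_div_nat_add_one _).of_norm_bounded fun j : ℕ =>
      abs_qSineFactor_sub_one_le hq0 hq1 a (c := (j : ℝ) + 1) (by positivity))
  simpa only [add_sub_cancel] using this

theorem summable_rpow_nat_add_one (hq0 : 0 ≤ q) (hq1 : q < 1) :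
    Summable fun j : ℕ => q ^ ((j : ℝ) + 1) := by
  refine ((summable_geometric_of_lt_one hq0 hq1).mul_left q).congr fun j => ?_
  rw [← Nat.cast_succ, rpow_natCast, pow_succ']

theorem multipliable_one_sub_rpow_nat_add_one (hq0 : 0 ≤ q) (hq1 : q < 1) :
    Multipliable fun j : ℕ => 1 - q ^ ((j : ℝ) + 1) := by
  simpa [sub_eq_add_neg] using
    Real.multipliable_one_add_of_summable (summable_rpow_nat_add_one hq0 hq1).neg

theorem tprod_one_sub_rpow_nat_add_one_ne_zero (hq0 : 0 ≤ q) (hq1 : q < 1) :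
    ∏' j : ℕ, (1 - q ^ ((j : ℝ) + 1)) ≠ 0 := by
  simpa [sub_eq_add_neg] using tprod_one_add_ne_zero_of_summable
    (f := fun j : ℕ => -q ^ ((j : ℝ) + 1))
    (fun j => by
      simpa [← sub_eq_add_neg, sub_eq_zero] using (rpow_lt_one hq0 hq1 (by positivity)).ne')
    (by simpa [abs_of_nonneg (rpow_nonneg hq0 _)] using summable_rpow_nat_add_one hq0 hq1)

theorem one_sub_rpow_mul_tprod_eq (hq0 : 0 < q) (hq1 : q < 1) (a : ℝ) :
    (1 - q ^ a) *
        ∏' j : ℕ, ((1 - q ^ (((j : ℝ) + 1) + a)) * (1 - q ^ (((j : ℝ) + 1) - a))) =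
      (1 - q) * (∏' j : ℕ, (1 - q ^ ((j : ℝ) + 1))) ^ 2 *
        ((1 - q ^ a) / (1 - q) * ∏' j : ℕ, qSineFactor ((j : ℝ) + 1) a q) := by
  have hfactor (j : ℕ) : (1 - q ^ (((j : ℝ) + 1) + a)) * (1 - q ^ (((j : ℝ) + 1) - a)) =
      (1 - q ^ ((j : ℝ) + 1)) ^ 2 * qSineFactor ((j : ℝ) + 1) a q := by
    have : 1 - q ^ ((j : ℝ) + 1) ≠ 0 :=
      sub_ne_zero.mpr (rpow_lt_one hq0.le hq1 (by positivity)).ne'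
    rw [qSineFactor, mul_div_cancel₀ _ (pow_ne_zero 2 this)]
  have hP := multipliable_one_sub_rpow_nat_add_one hq0.le hq1
  rw [tprod_congr hfactor, (hP.pow 2).tprod_mul (multipliable_qSineFactor hq0 hq1 a),
    hP.tprod_pow]
  field_simp [sub_ne_zero.mpr hq1.ne']

end qParameter

theorem pi_mul_mul_tprod_one_sub_sq_div (x : ℝ) :
    π * x * ∏' j : ℕ, (1 - x ^ 2 / ((j : ℝ) + 1) ^ 2) = sin (π * x) := by
  have hm : Multipliable fun j : ℕ => 1 - x ^ 2 / ((j : ℝ) + 1) ^ 2 := by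
    simpa [sub_eq_add_neg, div_pow] using
      Real.multipliable_one_add_of_summable (summable_sq_div_nat_add_one x).neg
  exact tendsto_nhds_unique (hm.hasProd.tendsto_prod_nat.const_mul (π * x))
    (Real.tendsto_euler_sin_prod x)

theorem nhdsWithin_Ioo_zero_one_le_nhdsNE : 𝓝[Ioo 0 1] (1 : ℝ) ≤ 𝓝[≠] 1 :=
  nhdsWithin_mono _ fun _ hq => hq.2.ne

theorem tendsto_tprod_qSineFactor (a : ℝ) :
    Tendsto (fun q => ∏' j : ℕ, qSineFactor ((j : ℝ) + 1) a q) (𝓝[Ioo 0 1] 1)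
      (𝓝 (∏' j : ℕ, (1 - a ^ 2 / ((j : ℝ) + 1) ^ 2))) := by
  have hlim (j : ℕ) : Tendsto (fun q => qSineFactor ((j : ℝ) + 1) a q - 1) (𝓝[Ioo 0 1] 1)
      (𝓝 (-(a ^ 2 / ((j : ℝ) + 1) ^ 2))) := by
    simpa using ((tendsto_qSineFactor a (c := (j : ℝ) + 1) (by positivity)).sub_const 1).mono_left
      nhdsWithin_Ioo_zero_one_le_nhdsNE
  have hs : Tendsto (fun q => -log q / 2) (𝓝[Ioo 0 1] 1) (𝓝 0) := by
    simpa using (((continuousAt_log one_ne_zero).neg.div_const 2).tendsto).mono_left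
      nhdsWithin_le_nhds
  have hbound : ∀ᶠ q in 𝓝[Ioo 0 1] 1, ∀ j : ℕ,
      ‖qSineFactor ((j : ℝ) + 1) a q - 1‖ ≤ (|a| * exp |a| / ((j : ℝ) + 1)) ^ 2 := by
    filter_upwards [self_mem_nhdsWithin, hs.eventually_le_const zero_lt_one] with q hq hs1 j
    refine (abs_qSineFactor_sub_one_le hq.1 hq.2 a (by positivity)).trans ?_
    gcongr
    exact mul_le_of_le_one_left (abs_nonneg a) hs1
  simpa [← sub_eq_add_neg] using
    tendsto_tprod_one_add_of_dominated_convergence (summable_sq_div_nat_add_one _) hlim hbound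

theorem tendsto_one_sub_rpow_div_mul_tprod_qSineFactor (a : ℝ) :
    Tendsto (fun q => (1 - q ^ a) / (1 - q) * ∏' j : ℕ, qSineFactor ((j : ℝ) + 1) a q)
      (𝓝[Ioo 0 1] 1) (𝓝 (sin (π * a) / π)) := by
  have h := ((tendsto_one_sub_rpow_div_one_sub a).mono_left
    nhdsWithin_Ioo_zero_one_le_nhdsNE).mul (tendsto_tprod_qSineFactor a)
  rwa [← pi_mul_mul_tprod_one_sub_sq_div, mul_assoc, mul_div_cancel_left₀ _ pi_ne_zero]

/-- The `q → 1⁻` limit of the ratio of theta-like products: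
`lim_{q→1⁻} [(1−q^u) ∏_{j≥1} (1−q^{j+u})(1−q^{j−u})] /
           [(1−q^v) ∏_{j≥1} (1−q^{j+v})(1−q^{j−v})] = sin(πu)/sin(πv)`. -/
theorem theta_ratio_limit (u v : ℝ) (hv : Real.sin (Real.pi * v) ≠ 0) :
    Tendsto
      (fun q : ℝ =>
        ((1 - q ^ u) *
            ∏' j : ℕ, ((1 - q ^ (((j : ℝ) + 1) + u)) * (1 - q ^ (((j : ℝ) + 1) - u)))) /
          ((1 - q ^ v) *
            ∏' j : ℕ, ((1 - q ^ (((j : ℝ) + 1) + v)) * (1 - q ^ (((j : ℝ) + 1) - v)))))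
      (nhdsWithin 1 (Set.Ioo (0 : ℝ) 1))
      (nhds (Real.sin (Real.pi * u) / Real.sin (Real.pi * v))) := by
  have h := (tendsto_one_sub_rpow_div_mul_tprod_qSineFactor u).div
    (tendsto_one_sub_rpow_div_mul_tprod_qSineFactor v) (div_ne_zero hv pi_ne_zero)
  rw [div_div_div_cancel_right₀ pi_ne_zero] at h
  refine h.congr' (eventually_nhdsWithin_of_forall fun q ⟨hq0, hq1⟩ => ?_)
  have hD : (1 - q) * (∏' j : ℕ, (1 - q ^ ((j : ℝ) + 1))) ^ 2 ≠ 0 :=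
    mul_ne_zero (sub_ne_zero.mpr hq1.ne')
      (pow_ne_zero 2 (tprod_one_sub_rpow_nat_add_one_ne_zero hq0.le hq1))
  simp only [Pi.div_apply]
  rw [one_sub_rpow_mul_tprod_eq hq0 hq1, one_sub_rpow_mul_tprod_eq hq0 hq1,
    mul_div_mul_left _ _ hD]
end
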